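/- arXiv:2011.10951 — 4 statements merged into one kernel-verified Lean document; each statement's English description precedes it below -/
import Mathlib

section
/- Let n > 2, let t ∈ {1,…,n}, let p_t ∈ (0,1), and let q ∈ ℝ^n satisfy q_i ∈ (0,1) for all i and Σ_{i≠t} q_i = 1 − q_t. Then the supremum of D_CE(p‖q) over the open action set A_P = {p ∈ ℝ^n : p_i ∈ (0,1) for all i, p_t at index t, Σ_{i≠t} p_i = 1 − p_t} equals −p_t log q_t − (1−p_t) log(min_{i≠t} q_i). -/
/-!
Every `q i` with `i ≠ t` is at least `m = min_{i ≠ t} q i`, so on the action set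
`D_CE(p‖q) ≤ -p_t log q_t - (1 - p_t) log m`. Equality holds at the boundary point `e` that puts
all of the mass `1 - p_t` on a coordinate where the minimum is attained. For any `u` in the action
set, the points `e + ε (u - e)` with `0 < ε < 1` lie in it and tend to `e`, so by continuity of
`p ↦ D_CE(p‖q)` the bound is a limit of values on the action set: it is the supremum, although
it is not attained.
-/

open Finset

/-- Cross entropy `D_CE(p‖q) = -∑ i, p i * log (q i)` (with the convention `0 * log x = 0`,
which holds automatically for real multiplication). -/
noncomputable def DCE {n : ℕ} (p q : Fin n → ℝ) : ℝ :=
  -∑ i, p i * Real.log (q i)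

/-- The minimum of `q` over the non-target coordinates `i ≠ t`. -/
noncomputable def minNT {n : ℕ} (hn : 2 < n) (t : Fin n) (q : Fin n → ℝ) : ℝ :=
  (Finset.univ.erase t).inf'
    (by
      obtain ⟨b, hb⟩ := Fintype.exists_ne_of_one_lt_card
        (by rw [Fintype.card_fin]; omega) t
      exact ⟨b, Finset.mem_erase.mpr ⟨hb, Finset.mem_univ b⟩⟩)
    q

open Filter Topology

namespace CrossEntropy

variable {n : ℕ}

/-- The adversary's action set `A_P`. -/
def actionSet (t : Fin n) (pt : ℝ) : Set (Fin n → ℝ) :=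
  {p | (∀ i, p i ∈ Set.Ioo (0 : ℝ) 1) ∧ p t = pt ∧ ∑ i ∈ univ.erase t, p i = 1 - pt}

theorem continuous_DCE_left (q : Fin n → ℝ) : Continuous fun p => DCE p q := by
  unfold DCE
  fun_prop

theorem DCE_eq_sub_sum_erase (p q : Fin n → ℝ) (t : Fin n) :
    DCE p q = -p t * Real.log (q t) - ∑ i ∈ univ.erase t, p i * Real.log (q i) := by
  rw [DCE, ← add_sum_erase _ _ (mem_univ t)]
  ring

def twoPoint (t j : Fin n) (a b : ℝ) : Fin n → ℝ :=
  fun i => if i = t then a else if i = j then b else 0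

theorem twoPoint_eq_zero {t j i : Fin n} (hit : i ≠ t) (hij : i ≠ j) (a b : ℝ) :
    twoPoint t j a b i = 0 := by
  simp [twoPoint, hit, hij]

theorem sum_erase_twoPoint {t j : Fin n} (hjt : j ≠ t) (a b : ℝ) :
    ∑ i ∈ univ.erase t, twoPoint t j a b i = b := by
  rw [sum_eq_single_of_mem j (mem_erase.2 ⟨hjt, mem_univ j⟩)
    fun i hi hij => twoPoint_eq_zero (ne_of_mem_erase hi) hij a b]
  simp [twoPoint, hjt]

theorem DCE_twoPoint {t j : Fin n} (hjt : j ≠ t) (a b : ℝ) (q : Fin n → ℝ) :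
    DCE (twoPoint t j a b) q = -a * Real.log (q t) - b * Real.log (q j) := by
  rw [DCE_eq_sub_sum_erase, sum_eq_single_of_mem j (mem_erase.2 ⟨hjt, mem_univ j⟩)
    fun i hi hij => by rw [twoPoint_eq_zero (ne_of_mem_erase hi) hij, zero_mul]]
  simp [twoPoint, hjt]

theorem DCE_le_of_forall_ne_le {p q : Fin n → ℝ} {t : Fin n} {m : ℝ} (hp : ∀ i, 0 ≤ p i)
    (hm : 0 < m) (hmq : ∀ i ≠ t, m ≤ q i) :
    DCE p q ≤ -p t * Real.log (q t) - (∑ i ∈ univ.erase t, p i) * Real.log m := by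
  rw [DCE_eq_sub_sum_erase p q t, sum_mul]
  gcongr with i hi
  · exact hp i
  · exact hmq i (ne_of_mem_erase hi)

theorem exists_ne_minNT_eq (hn : 2 < n) (t : Fin n) (q : Fin n → ℝ) :
    ∃ j ≠ t, minNT hn t q = q j := by
  obtain ⟨j, hj, hjmin⟩ := exists_mem_eq_inf' _ q
  exact ⟨j, ne_of_mem_erase hj, hjmin⟩

theorem minNT_le (hn : 2 < n) {t i : Fin n} (hi : i ≠ t) (q : Fin n → ℝ) :
    minNT hn t q ≤ q i :=
  inf'_le q (mem_erase.2 ⟨hi, mem_univ i⟩)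

theorem add_mul_sub_mem_Ioo {a b ε : ℝ} (ha : a ∈ Set.Ico (0 : ℝ) 1)
    (hb : b ∈ Set.Ioo (0 : ℝ) 1) (hε : ε ∈ Set.Ioo (0 : ℝ) 1) :
    a + ε * (b - a) ∈ Set.Ioo (0 : ℝ) 1 := by
  obtain ⟨ha₀, ha₁⟩ := ha
  obtain ⟨hb₀, hb₁⟩ := hb
  obtain ⟨hε₀, hε₁⟩ := hε
  constructor <;> nlinarith

theorem mem_closure_actionSet {t : Fin n} {pt : ℝ} {e u : Fin n → ℝ}
    (he : ∀ i, e i ∈ Set.Ico (0 : ℝ) 1) (het : e t = pt)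
    (hesum : ∑ i ∈ univ.erase t, e i = 1 - pt) (hu : u ∈ actionSet t pt) :
    e ∈ closure (actionSet t pt) := by
  obtain ⟨hu01, hut, husum⟩ := hu
  have hpath : Tendsto (fun ε : ℝ => e + ε • (u - e)) (𝓝[>] 0) (𝓝 e) := by
    have : Continuous fun ε : ℝ => e + ε • (u - e) := by fun_prop
    simpa using (this.tendsto 0).mono_left nhdsWithin_le_nhds
  refine mem_closure_of_tendsto hpath ?_
  filter_upwards [Ioo_mem_nhdsGT (zero_lt_one' ℝ)] with ε hε
  refine ⟨fun i => add_mul_sub_mem_Ioo (he i) (hu01 i) hε, ?_, ?_⟩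
  · simp [het, hut]
  · simp only [Pi.add_apply, Pi.smul_apply, Pi.sub_apply, smul_eq_mul, sum_add_distrib,
      ← mul_sum, sum_sub_distrib, hesum, husum]
    ring

theorem uniform_mem_actionSet (hn : 2 ≤ n) (t : Fin n) {pt : ℝ}
    (hpt : pt ∈ Set.Ioo (0 : ℝ) 1) :
    (fun i => if i = t then pt else (1 - pt) / ((n : ℝ) - 1)) ∈ actionSet t pt := by
  have hn' : (1 : ℝ) ≤ (n : ℝ) - 1 := by
    have : (2 : ℝ) ≤ n := by exact_mod_cast hn
    linarith
  refine ⟨fun i => ?_, if_pos rfl, ?_⟩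
  · dsimp only
    split_ifs
    · exact hpt
    · obtain ⟨h₀, h₁⟩ := hpt
      constructor
      · exact div_pos (by linarith) (by linarith)
      · rw [div_lt_one (by linarith)]
        linarith
  · rw [sum_congr rfl fun i hi => if_neg (ne_of_mem_erase hi), sum_const,
      card_erase_of_mem (mem_univ t), card_univ, Fintype.card_fin, nsmul_eq_mul,
      Nat.cast_pred (by omega)]
    field_simp [(by linarith : (n : ℝ) - 1 ≠ 0)]

end CrossEntropy

open CrossEntropy

theorem statement_2_general (n : ℕ) (hn : 2 < n) (t : Fin n)
    (pt : ℝ) (hpt : pt ∈ Set.Ioo (0 : ℝ) 1)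
    (q : Fin n → ℝ) (hq : ∀ i, q i ∈ Set.Ioo (0 : ℝ) 1) :
    IsLUB ((fun p => DCE p q) ''
        {p : Fin n → ℝ | (∀ i, p i ∈ Set.Ioo (0 : ℝ) 1) ∧ p t = pt ∧
          ∑ i ∈ Finset.univ.erase t, p i = 1 - pt})
      (-pt * Real.log (q t) - (1 - pt) * Real.log (minNT hn t q)) := by
  obtain ⟨j, hjt, hmin⟩ := exists_ne_minNT_eq hn t q
  have he : ∀ i, twoPoint t j pt (1 - pt) i ∈ Set.Ico (0 : ℝ) 1 := fun i => by
    obtain ⟨h₀, h₁⟩ := hpt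
    unfold twoPoint
    split_ifs <;> constructor <;> linarith
  refine isLUB_of_mem_closure ?_ ?_
  · rintro _ ⟨p, ⟨hp, rfl, hpsum⟩, rfl⟩
    have := DCE_le_of_forall_ne_le (fun i => (hp i).1.le) (hmin ▸ (hq j).1)
      fun i hi => minNT_le hn hi q
    rwa [hpsum] at this
  · have := map_mem_closure (continuous_DCE_left q)
      (mem_closure_actionSet he (if_pos rfl) (sum_erase_twoPoint hjt _ _)
        (uniform_mem_actionSet hn.le t hpt))
      (Set.mapsTo_image _ _)
    rwa [DCE_twoPoint hjt, ← hmin] at this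

theorem statement_2 (n : ℕ) (hn : 2 < n) (t : Fin n)
    (pt : ℝ) (hpt : pt ∈ Set.Ioo (0 : ℝ) 1)
    (q : Fin n → ℝ) (hq : ∀ i, q i ∈ Set.Ioo (0 : ℝ) 1)
    (hqsum : ∑ i ∈ Finset.univ.erase t, q i = 1 - q t) :
    IsLUB ((fun p => DCE p q) ''
        {p : Fin n → ℝ | (∀ i, p i ∈ Set.Ioo (0 : ℝ) 1) ∧ p t = pt ∧
          ∑ i ∈ Finset.univ.erase t, p i = 1 - pt})
      (-pt * Real.log (q t) - (1 - pt) * Real.log (minNT hn t q)) :=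
  statement_2_general n hn t pt hpt q hq
end

section
/- Let n > 2, let t ∈ {1,…,n}, let p_t, q_t ∈ (0,1), and let q ∈ ℝ^n with q_i ∈ (0,1) for all i, q at index t equal to q_t, and Σ_{i≠t} q_i = 1 − q_t. Then −p_t log q_t − (1−p_t) log(min_{i≠t} q_i) = −p_t log q_t − (1−p_t) log((1−q_t)/(n−1)) if and only if q_i = (1−q_t)/(n−1) for all i ≠ t; i.e., the uniform non-target distribution is the unique minimizer of the worst-case cross-entropy loss over A_Q. -/
open Finset

/-! Since `1 - p_t ≠ 0` and `log` is injective on `(0, ∞)`, the loss equation says that the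
minimum of the non-target confidences equals their average `(1 - q_t) / (n - 1)`; a minimum
equals the average only when all terms are equal. -/

theorem Finset.inf'_eq_average_iff {ι 𝕜 : Type*} [Field 𝕜] [LinearOrder 𝕜]
    [IsStrictOrderedRing 𝕜] {s : Finset ι} (hs : s.Nonempty) (f : ι → 𝕜) :
    s.inf' hs f = (∑ i ∈ s, f i) / #s ↔ ∀ i ∈ s, f i = (∑ i ∈ s, f i) / #s := by
  set a := (∑ i ∈ s, f i) / #s
  constructor
  · intro hinf
    have hle : ∀ i ∈ s, a ≤ f i := fun i hi => hinf ▸ inf'_le f hi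
    have hsum : ∑ _i ∈ s, a = ∑ i ∈ s, f i := by
      rw [sum_const, nsmul_eq_mul, mul_div_cancel₀ _ (by exact_mod_cast hs.card_pos.ne')]
    exact fun i hi => ((sum_eq_sum_iff_of_le hle).1 hsum i hi).symm
  · intro hconst
    obtain ⟨i, hi, hmin⟩ := exists_mem_eq_inf' hs f
    exact hmin.trans (hconst i hi)

theorem statement_4_general (n : ℕ) (hn : 2 < n) (t : Fin n)
    (pt qt : ℝ) (hpt : pt ∈ Set.Ioo (0 : ℝ) 1)
    (q : Fin n → ℝ) (hq : ∀ i, q i ∈ Set.Ioo (0 : ℝ) 1)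
    (hqsum : ∑ i ∈ Finset.univ.erase t, q i = 1 - qt) :
    -pt * Real.log qt - (1 - pt) * Real.log (minNT hn t q) =
      -pt * Real.log qt - (1 - pt) * Real.log ((1 - qt) / ((n : ℝ) - 1)) ↔
    ∀ i, i ≠ t → q i = (1 - qt) / ((n : ℝ) - 1) := by
  have hcard : #(univ.erase t) = n - 1 := by
    rw [card_erase_of_mem (mem_univ t), card_univ, Fintype.card_fin]
  have hs : (univ.erase t).Nonempty := card_pos.1 (by omega)
  have hu : (1 - qt) / ((n : ℝ) - 1) = (∑ i ∈ univ.erase t, q i) / #(univ.erase t) := by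
    rw [hqsum, hcard, Nat.cast_sub (by omega), Nat.cast_one]
  have hmin_pos : 0 < minNT hn t q := (lt_inf'_iff _).2 fun i _ => (hq i).1
  have hu_pos : 0 < (1 - qt) / ((n : ℝ) - 1) :=
    hu ▸ div_pos (sum_pos (fun i _ => (hq i).1) hs) (by exact_mod_cast hs.card_pos)
  rw [sub_right_inj, mul_right_inj' (sub_ne_zero.2 hpt.2.ne'),
    Real.log_injOn_pos.eq_iff hmin_pos hu_pos, minNT, hu, inf'_eq_average_iff]
  simp only [mem_erase, mem_univ, and_true]

theorem statement_4 (n : ℕ) (hn : 2 < n) (t : Fin n)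
    (pt qt : ℝ) (hpt : pt ∈ Set.Ioo (0 : ℝ) 1) (hqt : qt ∈ Set.Ioo (0 : ℝ) 1)
    (q : Fin n → ℝ) (hq : ∀ i, q i ∈ Set.Ioo (0 : ℝ) 1)
    (hqtt : q t = qt)
    (hqsum : ∑ i ∈ Finset.univ.erase t, q i = 1 - qt) :
    -pt * Real.log qt - (1 - pt) * Real.log (minNT hn t q) =
      -pt * Real.log qt - (1 - pt) * Real.log ((1 - qt) / ((n : ℝ) - 1)) ↔
    ∀ i, i ≠ t → q i = (1 - qt) / ((n : ℝ) - 1) :=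
  statement_4_general n hn t pt qt hpt q hq hqsum
end

section
/- Let n > 2, let t ∈ {1,…,n}, let p_t, q_t ∈ (0,1). For each k ≠ t let p^(k) ∈ ℝ^n be defined by p^(k)_t = p_t, p^(k)_k = 1 − p_t, and p^(k)_i = 0 otherwise, and let q* ∈ ℝ^n be defined by q*_t = q_t and q*_i = (1−q_t)/(n−1) for i ≠ t. Then for every q ∈ ℝ^n with q_i ∈ (0,1) for all i, q at index t equal to q_t, and Σ_{i≠t} q_i = 1 − q_t, the expected loss against the uniform mixed adversary satisfies (1/(n−1)) Σ_{k≠t} D_CE(p^(k)‖q) ≥ (1/(n−1)) Σ_{k≠t} D_CE(p^(k)‖q*); that is, q* is a best response of the model to the adversary's uniform mixed strategy over {p^(k) : k ≠ t}. -/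
/-!
Against the adversary `p⁽ᵏ⁾`, the loss of `q` only sees `log q_t` and `log q_k`, so the averaged
loss is an affine function of `∑_{k ≠ t} log q_k` with slope `-(1 - p_t) ≤ 0`. Under the constraint
`∑_{k ≠ t} q_k = 1 - q_t`, Jensen's inequality for the concave `log` bounds this sum by
`(n - 1) log ((1 - q_t) / (n - 1))`, its value at `q*`.
-/

open Finset

open Real

lemma sum_log_le_card_mul_log_mean {ι : Type*} (s : Finset ι) (x : ι → ℝ)
    (hx : ∀ i ∈ s, 0 < x i) :
    ∑ i ∈ s, log (x i) ≤ #s * log ((∑ i ∈ s, x i) / #s) := by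
  rcases s.eq_empty_or_nonempty with rfl | hs
  · simp
  have hcard : (0 : ℝ) < #s := by exact_mod_cast hs.card_pos
  have jensen := (strictConcaveOn_log_Ioi.concaveOn).le_map_sum (t := s) (w := fun _ => (#s : ℝ)⁻¹)
    (p := x) (fun _ _ => by positivity) (by simp [hcard.ne']) hx
  simp only [smul_eq_mul, ← mul_sum] at jensen
  rwa [inv_mul_eq_div, inv_mul_eq_div, div_le_iff₀' hcard] at jensen

lemma DCE_ite_ite {n : ℕ} {t k : Fin n} (hk : k ≠ t) (a b : ℝ) (r : Fin n → ℝ) :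
    DCE (fun i => if i = t then a else if i = k then b else 0) r
      = -(a * log (r t) + b * log (r k)) := by
  rw [DCE, ← sum_subset (subset_univ {t, k}), sum_pair hk.symm]
  · simp [hk]
  · intro i _ hi
    simp only [mem_insert, mem_singleton, not_or] at hi
    simp [hi.1, hi.2]

lemma sum_erase_DCE_ite_ite {n : ℕ} (t : Fin n) (a b : ℝ) (r : Fin n → ℝ) :
    ∑ k ∈ univ.erase t, DCE (fun i => if i = t then a else if i = k then b else 0) r
      = -(#(univ.erase t) * (a * log (r t)) + b * ∑ k ∈ univ.erase t, log (r k)) := by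
  rw [sum_congr rfl fun k hk => DCE_ite_ite (ne_of_mem_erase hk) a b r]
  simp only [sum_neg_distrib, sum_add_distrib, sum_const, nsmul_eq_mul, mul_sum]

theorem statement_5_general (n : ℕ) (t : Fin n)
    (pt qt : ℝ) (hpt : pt ∈ Set.Ioo (0 : ℝ) 1)
    (pvec : Fin n → Fin n → ℝ)
    (hpvec : pvec = fun k i => if i = t then pt else if i = k then 1 - pt else 0)
    (qstar : Fin n → ℝ)
    (hqstar : qstar = fun i => if i = t then qt else (1 - qt) / ((n : ℝ) - 1))
    (q : Fin n → ℝ) (hq : ∀ i, q i ∈ Set.Ioo (0 : ℝ) 1)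
    (hqtt : q t = qt)
    (hqsum : ∑ i ∈ Finset.univ.erase t, q i = 1 - qt) :
    (1 / ((n : ℝ) - 1)) * ∑ k ∈ Finset.univ.erase t, DCE (pvec k) q ≥
      (1 / ((n : ℝ) - 1)) * ∑ k ∈ Finset.univ.erase t, DCE (pvec k) qstar := by
  subst hpvec hqstar hqtt
  have hcard : (#(univ.erase t) : ℝ) = n - 1 := by
    rw [card_erase_of_mem (mem_univ t), card_univ, Fintype.card_fin,
      Nat.cast_sub (Nat.one_le_of_lt t.isLt), Nat.cast_one]
  have hqstar_log : ∑ k ∈ univ.erase t, log (if k = t then q t else (1 - q t) / ((n : ℝ) - 1))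
      = #(univ.erase t) * log ((∑ k ∈ univ.erase t, q k) / #(univ.erase t)) := by
    rw [sum_congr rfl fun k hk => by rw [if_neg (ne_of_mem_erase hk)], sum_const, nsmul_eq_mul,
      hqsum, hcard]
  have jensen := sum_log_le_card_mul_log_mean (univ.erase t) q fun i _ => (hq i).1
  rw [ge_iff_le, sum_erase_DCE_ite_ite, sum_erase_DCE_ite_ite, if_pos rfl, hqstar_log]
  have h1pt : 0 ≤ 1 - pt := sub_nonneg.2 hpt.2.le
  have hscale : 0 ≤ 1 / ((n : ℝ) - 1) := by rw [← hcard]; positivity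
  gcongr

theorem statement_5 (n : ℕ) (hn : 2 < n) (t : Fin n)
    (pt qt : ℝ) (hpt : pt ∈ Set.Ioo (0 : ℝ) 1) (hqt : qt ∈ Set.Ioo (0 : ℝ) 1)
    (pvec : Fin n → Fin n → ℝ)
    (hpvec : pvec = fun k i => if i = t then pt else if i = k then 1 - pt else 0)
    (qstar : Fin n → ℝ)
    (hqstar : qstar = fun i => if i = t then qt else (1 - qt) / ((n : ℝ) - 1))
    (q : Fin n → ℝ) (hq : ∀ i, q i ∈ Set.Ioo (0 : ℝ) 1)
    (hqtt : q t = qt)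
    (hqsum : ∑ i ∈ Finset.univ.erase t, q i = 1 - qt) :
    (1 / ((n : ℝ) - 1)) * ∑ k ∈ Finset.univ.erase t, DCE (pvec k) q ≥
      (1 / ((n : ℝ) - 1)) * ∑ k ∈ Finset.univ.erase t, DCE (pvec k) qstar :=
  statement_5_general n t pt qt hpt pvec hpvec qstar hqstar q hq hqtt hqsum
end

section
/- Let n > 2, let t ∈ {1,…,n}, and let p_t, q_t ∈ (0,1). Then min over q in the closed model action set {q ∈ ℝ^n : q_i ∈ (0,1) for all i, q at index t equals q_t, Σ_{i≠t} q_i = 1 − q_t} of the quantity sup over p in the adversary action set {p ∈ ℝ^n : p_i ∈ (0,1) for all i, p at index t equals p_t, Σ_{i≠t} p_i = 1 − p_t} of D_CE(p‖q) equals −p_t log q_t − (1−p_t) log((1−q_t)/(n−1)), and this minimax value is attained exactly at q* given by q*_t = q_t and q*_i = (1−q_t)/(n−1) for i ≠ t. -/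
open Finset

/-!
Splitting off the target coordinate, `D_CE(p‖q) = -p_t log q_t + ∑_{i ≠ t} p_i (-log q_i)` is
affine in the off-target mass `1 - p_t` spread over an open face. Its supremum over the face
(approached, never attained) puts all of that mass on the smallest `q_i`, so it equals
`-p_t log q_t - (1 - p_t) log (min_{i ≠ t} q_i)`. The smallest of the `n - 1` numbers `q_i`
summing to `1 - q_t` is at most their mean `(1 - q_t)/(n - 1)`, with equality exactly when they
are all equal, i.e. at `q*`.
-/

open Filter Topology Real

theorem isLUB_image_sum_mul_of_le {ι : Type*} {s : Finset ι} {c : ℝ} (hc : 0 < c)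
    {f : ι → ℝ} {i₀ : ι} (hi₀ : i₀ ∈ s) (hmax : ∀ i ∈ s, f i ≤ f i₀) :
    IsLUB ((fun w : ι → ℝ => ∑ i ∈ s, w i * f i) ''
      {w | (∀ i ∈ s, 0 < w i) ∧ ∑ i ∈ s, w i = c}) (c * f i₀) := by
  classical
  refine ⟨?_, fun b hb => ?_⟩
  · rintro _ ⟨w, ⟨hpos, hsum⟩, rfl⟩
    calc ∑ i ∈ s, w i * f i ≤ ∑ i ∈ s, w i * f i₀ :=
          sum_le_sum fun i hi => mul_le_mul_of_nonneg_left (hmax i hi) (hpos i hi).le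
      _ = c * f i₀ := by rw [← sum_mul, hsum]
  · -- mix the vertex `c • δ_{i₀}` with the barycentre of the face and let the weight `ε` → 0
    have hs : (0 : ℝ) < #s := Nat.cast_pos.2 (card_pos.2 ⟨i₀, hi₀⟩)
    set u := c / #s
    have hu : 0 < u := div_pos hc hs
    let w : ℝ → ι → ℝ := fun ε i => ε * u + if i = i₀ then (1 - ε) * c else 0
    have hw : ∀ ε ∈ Set.Ioo (0 : ℝ) 1, (∀ i ∈ s, 0 < w ε i) ∧ ∑ i ∈ s, w ε i = c := by
      rintro ε ⟨hε0, hε1⟩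
      refine ⟨fun i _ => ?_, ?_⟩
      · have : 0 ≤ if i = i₀ then (1 - ε) * c else 0 := by
          split_ifs <;> nlinarith
        have := mul_pos hε0 hu
        linarith
      · simp only [w, sum_add_distrib, sum_const, nsmul_eq_mul, sum_ite_eq', if_pos hi₀, u]
        field_simp
        ring
    have hval : ∀ ε, ∑ i ∈ s, w ε i * f i = ε * (u * ∑ i ∈ s, f i) + (1 - ε) * (c * f i₀) := by
      intro ε
      simp only [w, add_mul, sum_add_distrib, ite_mul, zero_mul, sum_ite_eq', if_pos hi₀, mul_sum,
        mul_assoc]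
    have hlim : Tendsto (fun ε => ε * (u * ∑ i ∈ s, f i) + (1 - ε) * (c * f i₀)) (𝓝[>] 0)
        (𝓝 (c * f i₀)) := by
      have hcont : Continuous fun ε : ℝ => ε * (u * ∑ i ∈ s, f i) + (1 - ε) * (c * f i₀) := by
        fun_prop
      simpa using (hcont.tendsto 0).mono_left nhdsWithin_le_nhds
    refine le_of_tendsto hlim ?_
    filter_upwards [Ioo_mem_nhdsGT one_pos] with ε hε
    exact hval ε ▸ hb ⟨w ε, hw ε hε, rfl⟩

theorem Finset.card_mul_inf'_le_sum {ι : Type*} {s : Finset ι} (hs : s.Nonempty) (f : ι → ℝ) :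
    #s * s.inf' hs f ≤ ∑ i ∈ s, f i := by
  simpa using card_nsmul_le_sum s f _ fun i hi => inf'_le f hi

theorem Finset.sum_eq_card_mul_inf'_iff {ι : Type*} {s : Finset ι} (hs : s.Nonempty)
    (f : ι → ℝ) : ∑ i ∈ s, f i = #s * s.inf' hs f ↔ ∀ i ∈ s, f i = s.inf' hs f := by
  have hsub : ∑ i ∈ s, f i - #s * s.inf' hs f = ∑ i ∈ s, (f i - s.inf' hs f) := by
    rw [sum_sub_distrib, sum_const, nsmul_eq_mul]
  rw [← sub_eq_zero, hsub, sum_eq_zero_iff_of_nonneg fun i hi => sub_nonneg.2 (inf'_le f hi)]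
  simp only [sub_eq_zero]

section TargetSimplex

variable {n : ℕ}

noncomputable def actionSet (t : Fin n) (a : ℝ) : Set (Fin n → ℝ) :=
  {p | (∀ i, p i ∈ Set.Ioo (0 : ℝ) 1) ∧ p t = a ∧ ∑ i ∈ univ.erase t, p i = 1 - a}

noncomputable def uniformOffTarget (t : Fin n) (a : ℝ) : Fin n → ℝ :=
  fun i => if i = t then a else (1 - a) / ((n : ℝ) - 1)

theorem Fin.card_univ_erase_cast (t : Fin n) : (#(univ.erase t) : ℝ) = n - 1 := by
  rw [card_erase_of_mem (mem_univ t), card_univ, Fintype.card_fin, Nat.cast_sub t.pos,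
    Nat.cast_one]

theorem uniformOffTarget_mem_actionSet (hn : 2 ≤ n) (t : Fin n) {a : ℝ} (ha : a ∈ Set.Ioo 0 1) :
    uniformOffTarget t a ∈ actionSet t a := by
  obtain ⟨ha0, ha1⟩ := ha
  have hn1 : (1 : ℝ) ≤ n - 1 := le_sub_iff_add_le.2 (by exact_mod_cast hn)
  have hoff : (1 - a) / ((n : ℝ) - 1) ∈ Set.Ioo 0 1 :=
    ⟨div_pos (by linarith) (by linarith), (div_lt_one (by linarith)).2 (by linarith)⟩
  refine ⟨fun i => ?_, if_pos rfl, ?_⟩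
  · unfold uniformOffTarget
    split_ifs
    exacts [⟨ha0, ha1⟩, hoff]
  · unfold uniformOffTarget
    rw [sum_congr rfl fun i hi => if_neg (ne_of_mem_erase hi), sum_const, nsmul_eq_mul,
      Fin.card_univ_erase_cast]
    field_simp

theorem eq_uniformOffTarget_iff {t : Fin n} {a : ℝ} {q : Fin n → ℝ} (hq : q t = a) :
    q = uniformOffTarget t a ↔ ∀ i ≠ t, q i = (1 - a) / ((n : ℝ) - 1) := by
  refine ⟨fun h i hi => by rw [h, uniformOffTarget, if_neg hi], fun h => funext fun i => ?_⟩
  by_cases hi : i = t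
  · rw [hi, hq, uniformOffTarget, if_pos rfl]
  · rw [h i hi, uniformOffTarget, if_neg hi]

theorem DCE_eq_add_sum_erase (p q : Fin n → ℝ) (t : Fin n) :
    DCE p q = -(p t * log (q t)) + ∑ i ∈ univ.erase t, p i * -log (q i) := by
  rw [DCE, ← add_sum_erase _ _ (mem_univ t)]
  simp only [mul_neg, sum_neg_distrib, neg_add]

theorem image_DCE_actionSet (t : Fin n) {pt : ℝ} (hpt : pt ∈ Set.Ioo 0 1) (q : Fin n → ℝ) :
    (fun p => DCE p q) '' actionSet t pt =
      (fun w : Fin n → ℝ => -(pt * log (q t)) + ∑ i ∈ univ.erase t, w i * -log (q i)) ''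
        {w | (∀ i ∈ univ.erase t, 0 < w i) ∧ ∑ i ∈ univ.erase t, w i = 1 - pt} := by
  ext v
  constructor
  · rintro ⟨p, ⟨hp, hpt, hsum⟩, rfl⟩
    exact ⟨p, ⟨fun i _ => (hp i).1, hsum⟩, by dsimp only; rw [DCE_eq_add_sum_erase p q t, hpt]⟩
  · rintro ⟨w, ⟨hw, hsum⟩, rfl⟩
    have hoff : ∀ i ∈ univ.erase t, Function.update w t pt i = w i := fun i hi =>
      Function.update_of_ne (ne_of_mem_erase hi) _ _
    refine ⟨Function.update w t pt, ⟨fun i => ?_, by simp, ?_⟩, ?_⟩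
    · by_cases hi : i = t
      · rw [hi, Function.update_self]
        exact hpt
      · have hi' : i ∈ univ.erase t := mem_erase.2 ⟨hi, mem_univ i⟩
        have hle : w i ≤ 1 - pt := hsum ▸ single_le_sum (fun j hj => (hw j hj).le) hi'
        rw [hoff i hi']
        exact ⟨hw i hi', by linarith [hpt.1]⟩
    · rw [sum_congr rfl hoff, hsum]
    · dsimp only
      rw [DCE_eq_add_sum_erase, sum_congr rfl fun i hi => by rw [hoff i hi]]
      simp

theorem Fin.univ_erase_nonempty (hn : 1 < n) (t : Fin n) : (univ.erase t).Nonempty := by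
  rw [← card_pos, card_erase_of_mem (mem_univ t), card_univ, Fintype.card_fin]
  omega

theorem minNT_pos (hn : 2 < n) (t : Fin n) {q : Fin n → ℝ} (hq : ∀ i, 0 < q i) :
    0 < minNT hn t q :=
  (lt_inf'_iff _).2 fun i _ => hq i

theorem minNT_le_div (hn : 2 < n) (t : Fin n) {q : Fin n → ℝ} {d : ℝ}
    (hq : ∑ i ∈ univ.erase t, q i = d) : minNT hn t q ≤ d / ((n : ℝ) - 1) := by
  have hn1 : (0 : ℝ) < n - 1 := sub_pos.2 (by exact_mod_cast hn.trans' one_lt_two)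
  rw [le_div_iff₀' hn1, ← Fin.card_univ_erase_cast t, ← hq]
  exact card_mul_inf'_le_sum _ q

theorem minNT_eq_div_iff (hn : 2 < n) (t : Fin n) {q : Fin n → ℝ} {d : ℝ}
    (hq : ∑ i ∈ univ.erase t, q i = d) :
    minNT hn t q = d / ((n : ℝ) - 1) ↔ ∀ i ≠ t, q i = d / ((n : ℝ) - 1) := by
  have hn1 : (0 : ℝ) < n - 1 := sub_pos.2 (by exact_mod_cast hn.trans' one_lt_two)
  constructor
  · intro h i hi
    have hsum : ∑ i ∈ univ.erase t, q i = #(univ.erase t) * minNT hn t q := by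
      rw [h, hq, Fin.card_univ_erase_cast]
      field_simp
    rw [← h]
    exact (sum_eq_card_mul_inf'_iff (Fin.univ_erase_nonempty hn.le t) q).1 hsum i
      (mem_erase.2 ⟨hi, mem_univ i⟩)
  · intro h
    obtain ⟨i₀, hi₀, hmin⟩ : ∃ i ∈ univ.erase t, minNT hn t q = q i := exists_mem_eq_inf' _ q
    rw [hmin, h i₀ (ne_of_mem_erase hi₀)]

theorem isLUB_DCE_image_actionSet (hn : 2 < n) (t : Fin n) {pt : ℝ} (hpt : pt ∈ Set.Ioo 0 1)
    {q : Fin n → ℝ} (hq : ∀ i, 0 < q i) :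
    IsLUB ((fun p => DCE p q) '' actionSet t pt)
      (-pt * log (q t) - (1 - pt) * log (minNT hn t q)) := by
  obtain ⟨i₀, hi₀, hmin⟩ : ∃ i ∈ univ.erase t, minNT hn t q = q i := exists_mem_eq_inf' _ q
  have hmax : ∀ i ∈ univ.erase t, -log (q i) ≤ -log (q i₀) := fun i hi =>
    neg_le_neg (log_le_log (hq i₀) (hmin ▸ inf'_le q hi))
  have hlub := isLUB_image_sum_mul_of_le (sub_pos.2 hpt.2) hi₀ hmax
  have hshift := (OrderIso.addLeft (-(pt * log (q t)))).isLUB_image'.2 hlub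
  rw [Set.image_image] at hshift
  simp only [OrderIso.addLeft_apply] at hshift
  rw [image_DCE_actionSet t hpt, hmin, show -pt * log (q t) - (1 - pt) * log (q i₀) =
    -(pt * log (q t)) + (1 - pt) * -log (q i₀) by ring]
  exact hshift

end TargetSimplex

theorem statement_9 (n : ℕ) (hn : 2 < n) (t : Fin n)
    (pt qt : ℝ) (hpt : pt ∈ Set.Ioo (0 : ℝ) 1) (hqt : qt ∈ Set.Ioo (0 : ℝ) 1)
    (AP : Set (Fin n → ℝ))
    (hAP : AP = {p : Fin n → ℝ | (∀ i, p i ∈ Set.Ioo (0 : ℝ) 1) ∧ p t = pt ∧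
      ∑ i ∈ Finset.univ.erase t, p i = 1 - pt})
    (AQ : Set (Fin n → ℝ))
    (hAQ : AQ = {q : Fin n → ℝ | (∀ i, q i ∈ Set.Ioo (0 : ℝ) 1) ∧ q t = qt ∧
      ∑ i ∈ Finset.univ.erase t, q i = 1 - qt})
    (qstar : Fin n → ℝ)
    (hqstar : qstar = fun i => if i = t then qt else (1 - qt) / ((n : ℝ) - 1)) :
    IsLeast ((fun q => sSup ((fun p => DCE p q) '' AP)) '' AQ)
      (-pt * Real.log qt - (1 - pt) * Real.log ((1 - qt) / ((n : ℝ) - 1))) ∧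
    (∀ q ∈ AQ, (sSup ((fun p => DCE p q) '' AP) =
        -pt * Real.log qt - (1 - pt) * Real.log ((1 - qt) / ((n : ℝ) - 1)) ↔
      q = qstar)) := by
  obtain rfl : AP = actionSet t pt := hAP
  obtain rfl : AQ = actionSet t qt := hAQ
  obtain rfl : qstar = uniformOffTarget t qt := hqstar
  have hstar := uniformOffTarget_mem_actionSet hn.le t hqt
  have hvalue : ∀ q ∈ actionSet t qt,
      -pt * log qt - (1 - pt) * log ((1 - qt) / ((n : ℝ) - 1)) ≤
        sSup ((fun p => DCE p q) '' actionSet t pt) ∧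
      (sSup ((fun p => DCE p q) '' actionSet t pt) =
        -pt * log qt - (1 - pt) * log ((1 - qt) / ((n : ℝ) - 1)) ↔
        q = uniformOffTarget t qt) := by
    rintro q ⟨hq, hqt, hsum⟩
    have hm := minNT_pos hn t fun i => (hq i).1
    have hle := minNT_le_div hn t hsum
    have h1pt : 0 < 1 - pt := sub_pos.2 hpt.2
    rw [((isLUB_DCE_image_actionSet hn t hpt fun i => (hq i).1).csSup_eq
      ⟨_, Set.mem_image_of_mem _ (uniformOffTarget_mem_actionSet hn.le t hpt)⟩), hqt,
      eq_uniformOffTarget_iff hqt, ← minNT_eq_div_iff hn t hsum, sub_right_inj,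
      mul_right_inj' h1pt.ne', log_injOn_pos.eq_iff hm (hm.trans_le hle)]
    exact ⟨by gcongr, Iff.rfl⟩
  refine ⟨⟨⟨_, hstar, (hvalue _ hstar).2.2 rfl⟩, ?_⟩, fun q hq => (hvalue q hq).2⟩
  rintro _ ⟨q, hq, rfl⟩
  exact (hvalue q hq).1
end
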